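/- Let (G,T) be a graft, let X ⊆ V(G) be an extreme set, let (Ĝ, T̂) be the rootlization of (G,T) by the mount X, the root r, and the attachment s, let F be a minimum join of (G,T), and let F̂ = F ∪ {rs}. Then: no circuit of Ĝ contains the edge rs, and no circuit of Ĝ with negative F̂-weight contains an edge joining s to a vertex of X. -/

import Mathlib

open scoped Classical

variable {V : Type*}

/-- The `F`-weight of a walk: number of edges outside `F` minus number of edges in `F`. -/
noncomputable def walkWeight {G : SimpleGraph V} (F : Set (Sym2 V)) {x y : V}
    (p : G.Walk x y) : ℤ :=
  ((p.edges.filter fun e => e ∉ F).length : ℤ) -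
    ((p.edges.filter fun e => e ∈ F).length : ℤ)

/-- The `F`-distance between `x` and `y`: the minimum `F`-weight of a path between them. -/
noncomputable def distF (G : SimpleGraph V) (F : Set (Sym2 V)) (x y : V) : ℤ :=
  sInf {w : ℤ | ∃ p : G.Walk x y, p.IsPath ∧ walkWeight F p = w}

/-- `F` is a join of the graft `(G, T)`. -/
def IsJoin (G : SimpleGraph V) (T : Set V) (F : Set (Sym2 V)) : Prop :=
  F ⊆ G.edgeSet ∧ ∀ v : V, v ∈ T ↔ Odd {e ∈ F | v ∈ e}.ncard

/-- `F` is a minimum join of the graft `(G, T)`. -/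
def IsMinJoin (G : SimpleGraph V) (T : Set V) (F : Set (Sym2 V)) : Prop :=
  IsJoin G T F ∧ ∀ F' : Set (Sym2 V), IsJoin G T F' → F.ncard ≤ F'.ncard

/-- `(G, T)` is a graft: every connected component contains an even number of vertices of `T`. -/
def IsGraft (G : SimpleGraph V) (T : Set V) : Prop :=
  ∀ v : V, Even {u | u ∈ T ∧ G.Reachable v u}.ncard

/-- `X` is an extreme set: `d_F(x, y) ≥ 0` for all `x, y ∈ X`. -/
def IsExtremeSet (G : SimpleGraph V) (F : Set (Sym2 V)) (X : Set V) : Prop :=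
  ∀ x ∈ X, ∀ y ∈ X, 0 ≤ distF G F x y

/-- `G` is bipartite with vertex set `Vset` and color classes `A`, `B`. -/
def IsBipartitionOn (G : SimpleGraph V) (Vset A B : Set V) : Prop :=
  A ∪ B = Vset ∧ Disjoint A B ∧
    ∀ v w : V, G.Adj v w → (v ∈ A ∧ w ∈ B) ∨ (v ∈ B ∧ w ∈ A)

/-- `X` is a maximal bipartitic extreme set with respect to color classes `A`, `B`. -/
def MaxBipExtreme (G : SimpleGraph V) (F : Set (Sym2 V)) (A B X : Set V) : Prop :=
  IsExtremeSet G F X ∧ (X ⊆ A ∨ X ⊆ B) ∧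
    ∀ X' : Set V, IsExtremeSet G F X' → (X' ⊆ A ∨ X' ⊆ B) → X ⊆ X' → X' = X

/-- `D_X`: the vertices of `Vset ∖ X` at negative `F`-distance from `X`. -/
def Dset (G : SimpleGraph V) (F : Set (Sym2 V)) (Vset X : Set V) : Set V :=
  {y | y ∈ Vset ∧ y ∉ X ∧ ∃ x ∈ X, distF G F x y < 0}

/-- `C_X = Vset ∖ X ∖ D_X`. -/
def Cset (G : SimpleGraph V) (F : Set (Sym2 V)) (Vset X : Set V) : Set V :=
  (Vset \ X) \ Dset G F Vset X

/-- `min_{x ∈ X} d_F(x, y)`. -/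
noncomputable def minDistX (G : SimpleGraph V) (F : Set (Sym2 V)) (X : Set V) (y : V) : ℤ :=
  sInf {d : ℤ | ∃ x ∈ X, distF G F x y = d}

/-- The graph `G − S` obtained by deleting the vertices of `S`. -/
def gDelete (G : SimpleGraph V) (S : Set V) : SimpleGraph V where
  Adj v w := G.Adj v w ∧ v ∉ S ∧ w ∉ S
  symm := ⟨fun v w ⟨h, hv, hw⟩ => ⟨h.symm, hw, hv⟩⟩
  loopless := ⟨fun v h => h.1.ne rfl⟩

/-- The subgraph of `G` induced by `S`. -/
def gRestrict (G : SimpleGraph V) (S : Set V) : SimpleGraph V where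
  Adj v w := G.Adj v w ∧ v ∈ S ∧ w ∈ S
  symm := ⟨fun v w ⟨h, hv, hw⟩ => ⟨h.symm, hw, hv⟩⟩
  loopless := ⟨fun v h => h.1.ne rfl⟩

/-- `C` is (the vertex set of) a connected component of `G − X`. -/
def IsCompOf (G : SimpleGraph V) (X C : Set V) : Prop :=
  ∃ v, v ∉ X ∧ C = {u | (gDelete G X).Reachable v u}

/-- `δ_G(C)`: the edges of `G` with exactly one end in `C`. -/
def edgeBoundary (G : SimpleGraph V) (C : Set V) : Set (Sym2 V) :=
  {e | e ∈ G.edgeSet ∧ ∃ u v : V, e = s(u, v) ∧ u ∈ C ∧ v ∉ C}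

/-- `X` is an `F`-combic set of the graft `(G, T)`. -/
def IsCombic (G : SimpleGraph V) (T : Set V) (F : Set (Sym2 V)) (X : Set V) : Prop :=
  (∀ u v : V, s(u, v) ∈ F → ¬(u ∈ X ∧ v ∈ X)) ∧
  (∀ C : Set V, IsCompOf G X C → Odd (C ∩ T).ncard →
      (edgeBoundary G C ∩ F).ncard = 1) ∧
  (∀ C : Set V, IsCompOf G X C → Even (C ∩ T).ncard →
      edgeBoundary G C ∩ F = ∅)

/-- The rootlization of `G` by the mount `X`, root `r` and attachment `s`. -/
def rootlize (G : SimpleGraph V) (X : Set V) (r s : V) : SimpleGraph V :=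
  SimpleGraph.fromRel fun v w => G.Adj v w ∨ (v = r ∧ w = s) ∨ (v = s ∧ w ∈ X)

/-- The initial component of `r`: the connected component of `r` in the subgraph
induced by the vertices at nonpositive `F`-distance from `r`. -/
def initComp (G : SimpleGraph V) (F : Set (Sym2 V)) (r : V) : Set V :=
  {x | (gRestrict G {y | distF G F r y ≤ 0}).Reachable r x}

/-!
The root `r` has the single neighbour `s`, so it lies on no circuit, and neither does the
edge `rs`. A circuit through `s` therefore enters and leaves `s` through two edges `sx`, `sy`
with `x, y ∈ X`, neither of which is in `F̂`, and in between runs along an `x`–`y` path of `G`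
whose `F̂`-weight equals its `F`-weight, which is at least `d_F(x, y) ≥ 0` because `X` is
extreme. Hence every circuit through `s` has `F̂`-weight at least `2`.
-/

open SimpleGraph Walk

section WalkWeight

variable {G H : SimpleGraph V} {F : Set (Sym2 V)}

lemma walkWeight_eq_of_perm {u v u' v' : V} (p : G.Walk u v) (q : H.Walk u' v')
    (h : p.edges.Perm q.edges) : walkWeight F p = walkWeight F q := by
  simp only [walkWeight, (h.filter _).length_eq]

lemma walkWeight_congr {F' : Set (Sym2 V)} {u v : V} (p : G.Walk u v)
    (h : ∀ e ∈ p.edges, e ∈ F ↔ e ∈ F') : walkWeight F p = walkWeight F' p := by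
  have hin : p.edges.filter (fun e => e ∈ F) = p.edges.filter (fun e => e ∈ F') :=
    List.filter_congr fun e he => by simp only [h e he]
  have hout : p.edges.filter (fun e => e ∉ F) = p.edges.filter (fun e => e ∉ F') :=
    List.filter_congr fun e he => by simp only [h e he]
  simp only [walkWeight, hin, hout]

lemma walkWeight_cons {u v w : V} (h : G.Adj u v) (p : G.Walk v w) :
    walkWeight F (cons h p) = (if s(u, v) ∈ F then -1 else 1) + walkWeight F p := by
  grind [walkWeight, edges_cons]

lemma walkWeight_concat {u v w : V} (p : G.Walk u v) (h : G.Adj v w) :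
    walkWeight F (p.concat h) = walkWeight F p + (if s(v, w) ∈ F then -1 else 1) := by
  grind [walkWeight, edges_concat]

lemma neg_length_le_walkWeight {u v : V} (p : G.Walk u v) :
    -(p.length : ℤ) ≤ walkWeight F p := by
  have hF : (p.edges.filter fun e => e ∈ F).length ≤ p.length :=
    p.length_edges ▸ List.length_filter_le _ _
  unfold walkWeight
  omega

lemma distF_le_walkWeight [Fintype V] {u v : V} (p : G.Walk u v) (hp : p.IsPath) :
    distF G F u v ≤ walkWeight F p := by
  refine csInf_le ⟨-(Fintype.card V : ℤ), ?_⟩ ⟨p, hp, rfl⟩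
  rintro w ⟨q, hq, rfl⟩
  have := hq.length_lt
  have := neg_length_le_walkWeight (F := F) q
  omega

end WalkWeight

namespace SimpleGraph.Walk

variable {G : SimpleGraph V}

lemma IsCycle.notMem_support_of_neighborSet_subsingleton {u w : V} {c : G.Walk w w}
    (hc : c.IsCycle) (hu : (G.neighborSet u).Subsingleton) : u ∉ c.support := by
  intro huc
  have hc' := hc.rotate huc
  exact hc'.snd_ne_penultimate <| hu (adj_snd hc'.not_nil) (adj_penultimate hc'.not_nil).symm

lemma IsCycle.exists_eq_cons_concat {u : V} {c : G.Walk u u} (hc : c.IsCycle) :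
    ∃ (a b : V) (ha : G.Adj u a) (q : G.Walk a b) (hb : G.Adj b u),
      q.IsPath ∧ u ∉ q.support ∧ c = cons ha (q.concat hb) := by
  cases c with
  | nil => exact absurd rfl hc.ne_nil
  | cons ha p =>
    have hb := p.adj_penultimate (not_nil_of_ne ha.ne.symm)
    have hp := ((cons_isCycle_iff p ha).1 hc).1
    rw [← p.concat_dropLast hb, concat_isPath_iff] at hp
    exact ⟨_, _, ha, p.dropLast, hb, hp.1, hp.2, by rw [p.concat_dropLast hb]⟩

end SimpleGraph.Walk

section Rootlization

variable {G : SimpleGraph V} {X : Set V} {r s : V}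

lemma rootlize_adj_iff {a b : V} : (rootlize G X r s).Adj a b ↔ a ≠ b ∧
    ((G.Adj a b ∨ (a = r ∧ b = s) ∨ (a = s ∧ b ∈ X)) ∨
      (G.Adj b a ∨ (b = r ∧ a = s) ∨ (b = s ∧ a ∈ X))) :=
  fromRel_adj _ _ _

lemma rootlize_adj_root (hr : ∀ w, ¬G.Adj r w) (hrs : r ≠ s) {w : V}
    (h : (rootlize G X r s).Adj r w) : w = s := by
  rw [rootlize_adj_iff] at h
  rcases h.2 with (h | h | h) | (h | h | h)
  exacts [absurd h (hr w), h.2, absurd h.1 hrs, absurd h.symm (hr w), absurd h.2 hrs, h.1]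

lemma rootlize_adj_attachment (hs : ∀ w, ¬G.Adj s w) {w : V}
    (h : (rootlize G X r s).Adj s w) : w = r ∨ w ∈ X := by
  rw [rootlize_adj_iff] at h
  rcases h.2 with (h' | h' | h') | (h' | h' | h')
  exacts [absurd h' (hs w), absurd h'.2.symm h.1, Or.inr h'.2, absurd h'.symm (hs w), Or.inl h'.1,
    absurd h'.1.symm h.1]

lemma rootlize_adj_of_ne {a b : V} (h : (rootlize G X r s).Adj a b)
    (har : a ≠ r) (has : a ≠ s) (hbr : b ≠ r) (hbs : b ≠ s) : G.Adj a b := by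
  rw [rootlize_adj_iff] at h
  rcases h.2 with (h | h | h) | (h | h | h)
  exacts [h, absurd h.1 har, absurd h.1 has, h.symm, absurd h.1 hbr, absurd h.1 hbs]

lemma rootlize_root_notMem_support (hr : ∀ w, ¬G.Adj r w) (hrs : r ≠ s) {v : V}
    {c : (rootlize G X r s).Walk v v} (hc : c.IsCycle) : r ∉ c.support :=
  hc.notMem_support_of_neighborSet_subsingleton fun _ ha _ hb =>
    (rootlize_adj_root hr hrs ha).trans (rootlize_adj_root hr hrs hb).symm

lemma rootlize_mem_edgeSet_of_mem_edges {a b : V} {q : (rootlize G X r s).Walk a b}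
    (hr : r ∉ q.support) (hs : s ∉ q.support) {e : Sym2 V} (he : e ∈ q.edges) :
    e ∈ G.edgeSet := by
  induction e using Sym2.ind with
  | _ x y =>
    have hx := q.fst_mem_support_of_mem_edges he
    have hy := q.snd_mem_support_of_mem_edges he
    exact rootlize_adj_of_ne (q.adj_of_mem_edges he) (ne_of_mem_of_not_mem hx hr)
      (ne_of_mem_of_not_mem hx hs) (ne_of_mem_of_not_mem hy hr) (ne_of_mem_of_not_mem hy hs)

lemma two_le_walkWeight_of_isCycle_rootlize [Fintype V] {F : Set (Sym2 V)}
    (hFG : F ⊆ G.edgeSet) (hext : IsExtremeSet G F X) (hr : ∀ w, ¬G.Adj r w)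
    (hs : ∀ w, ¬G.Adj s w) (hrX : r ∉ X) (hrs : r ≠ s)
    {c : (rootlize G X r s).Walk s s} (hc : c.IsCycle) :
    2 ≤ walkWeight (F ∪ {s(r, s)}) c := by
  have hrc := rootlize_root_notMem_support hr hrs hc
  obtain ⟨a, b, ha, q, hb, hq, hsq, rfl⟩ := hc.exists_eq_cons_concat
  have hrq : r ∉ q.support := fun h => hrc (by simp [support_concat, h])
  have haX : a ∈ X := (rootlize_adj_attachment hs ha).resolve_left (by rintro rfl; simp at hrc)
  have hbX : b ∈ X := (rootlize_adj_attachment hs hb.symm).resolve_left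
    (by rintro rfl; simp [support_concat] at hrc)
  have hqG (e) (he : e ∈ q.edges) : e ∈ G.edgeSet := rootlize_mem_edgeSet_of_mem_edges hrq hsq he
  -- `rs` is not an edge of `G`, so on `q` the joins `F̂` and `F` agree
  have hq_weight : walkWeight (F ∪ {s(r, s)}) q = walkWeight F (q.transfer G hqG) := by
    rw [← walkWeight_congr q fun e he => ?_]
    · exact walkWeight_eq_of_perm _ _ (by rw [edges_transfer])
    rw [Set.mem_union, Set.mem_singleton_iff, or_iff_left]
    rintro rfl
    exact hr s (hqG _ he)
  have hq_nonneg : 0 ≤ walkWeight F (q.transfer G hqG) :=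
    (hext a haX b hbX).trans (distF_le_walkWeight _ (hq.transfer hqG))
  have hsX (x) (hx : x ∈ X) : s(s, x) ∉ F ∪ {s(r, s)} := by
    rw [Set.mem_union, Set.mem_singleton_iff, Sym2.eq_iff]
    rintro (h | ⟨hsr, -⟩ | ⟨-, rfl⟩)
    exacts [hs x (hFG h), hrs hsr.symm, hrX hx]
  rw [walkWeight_cons, walkWeight_concat, Sym2.eq_swap (a := b), if_neg (hsX a haX),
    if_neg (hsX b hbX), hq_weight]
  omega

end Rootlization

theorem stmt_13_general [Fintype V] (G : SimpleGraph V) (Vg T X : Set V)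
    (F : Set (Sym2 V)) (r s : V)
    (hGV : ∀ v w : V, G.Adj v w → v ∈ Vg ∧ w ∈ Vg)
    (hF : IsMinJoin G T F) (hXV : X ⊆ Vg) (hext : IsExtremeSet G F X)
    (hr : r ∉ Vg) (hs : s ∉ Vg) (hrs : r ≠ s) :
    (∀ (v : V) (Q : (rootlize G X r s).Walk v v), Q.IsCycle → s(r, s) ∉ Q.edges) ∧
    (∀ (v : V) (Q : (rootlize G X r s).Walk v v), Q.IsCycle →
      walkWeight (F ∪ {s(r, s)}) Q < 0 → ∀ x ∈ X, s(s, x) ∉ Q.edges) := by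
  have hrG : ∀ w, ¬G.Adj r w := fun _ h => hr (hGV _ _ h).1
  have hsG : ∀ w, ¬G.Adj s w := fun _ h => hs (hGV _ _ h).1
  refine ⟨fun _ Q hQ hQrs => ?_, fun _ Q hQ hneg _ _ hQsx => ?_⟩
  · exact rootlize_root_notMem_support hrG hrs hQ (Q.fst_mem_support_of_mem_edges hQrs)
  · have hsQ := Q.fst_mem_support_of_mem_edges hQsx
    have h2 := two_le_walkWeight_of_isCycle_rootlize hF.1.1 hext hrG hsG
      (fun hrX => hr (hXV hrX)) hrs (hQ.rotate hsQ)
    rw [walkWeight_eq_of_perm _ Q (Q.rotate_edges s hsQ).perm] at h2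
    omega

/-- in the rootlization `(Ĝ, T̂)` with `F̂ = F ∪ {rs}` for a minimum join
`F` of `(G, T)`: no circuit of `Ĝ` contains the edge `rs`, and no circuit of `Ĝ` with
negative `F̂`-weight contains an edge joining `s` to a vertex of `X`. -/
theorem stmt_13 [Fintype V] (G : SimpleGraph V) (Vg T X : Set V)
    (F : Set (Sym2 V)) (r s : V)
    (hGV : ∀ v w : V, G.Adj v w → v ∈ Vg ∧ w ∈ Vg)
    (hT : T ⊆ Vg) (hGT : IsGraft G T)
    (hF : IsMinJoin G T F) (hXV : X ⊆ Vg) (hext : IsExtremeSet G F X)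
    (hr : r ∉ Vg) (hs : s ∉ Vg) (hrs : r ≠ s) :
    (∀ (v : V) (Q : (rootlize G X r s).Walk v v), Q.IsCycle → s(r, s) ∉ Q.edges) ∧
    (∀ (v : V) (Q : (rootlize G X r s).Walk v v), Q.IsCycle →
      walkWeight (F ∪ {s(r, s)}) Q < 0 → ∀ x ∈ X, s(s, x) ∉ Q.edges) :=
  stmt_13_general G Vg T X F r s hGV hF hXV hext hr hs hrs
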